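/- There is an absolute constant c > 0 with the following property. Let A ∈ ℝ^{n×n} be symmetric, let L > 0, assume every nonzero eigenvalue of A has magnitude at least L, and suppose S ∈ ℝ^{k×n} satisfies the subspace-embedding condition with parameter L for A. Then for every index i with λ_i(A) > 0, λ_i(SASᵀ) ≤ λ_i(A) + cL·log(λ_i(A)/L + 2). -/

import Mathlib

open Matrix

/-- The eigenvalues of a real symmetric (Hermitian) matrix listed in decreasing order;
`eigDesc A i` is the `i`-th largest eigenvalue of `A` (counted with multiplicity).
(Junk value `0` if `A` is not Hermitian.) -/
noncomputable def eigDesc {n : ℕ} (A : Matrix (Fin n) (Fin n) ℝ) : Fin n → ℝ := by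
  classical
  exact if h : A.IsHermitian then
    fun i => h.eigenvalues (Tuple.sort (fun j => -h.eigenvalues j) i)
  else fun _ => 0

/-- The span of the eigenvectors of `A` whose eigenvalues have magnitude at least `lam`. -/
noncomputable def eigSpanGE {n : ℕ} (A : Matrix (Fin n) (Fin n) ℝ) (lam : ℝ) :
    Submodule ℝ (EuclideanSpace ℝ (Fin n)) :=
  ⨆ (μ : ℝ) (_ : lam ≤ |μ|), Module.End.eigenspace (Matrix.toEuclideanLin A) μ

/-- `S` is a `(1 ± α)`-distortion subspace embedding on the subspace `W`. -/
def IsSubspaceEmbeddingOn {n k : ℕ} (S : Matrix (Fin k) (Fin n) ℝ) (α : ℝ)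
    (W : Submodule ℝ (EuclideanSpace ℝ (Fin n))) : Prop :=
  ∀ v ∈ W, (1 - α) * ‖v‖ ^ 2 ≤ ‖Matrix.toEuclideanLin S v‖ ^ 2 ∧
    ‖Matrix.toEuclideanLin S v‖ ^ 2 ≤ (1 + α) * ‖v‖ ^ 2

/-- `S` satisfies the subspace-embedding condition with parameter `L` for `A`:
for every `λ ≥ L`, `S` is a `(1 ± min(L/λ, 1/10))`-distortion subspace embedding on the
span of the eigenvectors of `A` whose eigenvalues have magnitude at least `λ`. -/
def SECondition {n k : ℕ} (S : Matrix (Fin k) (Fin n) ℝ) (A : Matrix (Fin n) (Fin n) ℝ)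
    (L : ℝ) : Prop :=
  ∀ lam : ℝ, L ≤ lam → IsSubspaceEmbeddingOn S (min (L / lam) (1 / 10)) (eigSpanGE A lam)


open Finset
open scoped RealInnerProductSpace

section core
variable {n : ℕ} {A : Matrix (Fin n) (Fin n) ℝ} (hA : A.IsHermitian)

noncomputable def sortPerm : Equiv.Perm (Fin n) := Tuple.sort (fun j => -hA.eigenvalues j)
noncomputable def sEig (j : Fin n) : ℝ := hA.eigenvalues (sortPerm hA j)
noncomputable def sVec (j : Fin n) : EuclideanSpace ℝ (Fin n) := hA.eigenvectorBasis (sortPerm hA j)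

lemma sEig_antitone : Antitone (sEig hA) := by
  intro a b hab
  have := Tuple.monotone_sort (fun j => -hA.eigenvalues j) hab
  simpa [sEig, sortPerm, neg_le_neg_iff] using this

lemma orthonormal_sVec : Orthonormal ℝ (sVec hA) :=
  (hA.eigenvectorBasis.orthonormal).comp _ (sortPerm hA).injective

lemma toEuclideanLin_sVec (j : Fin n) :
    Matrix.toEuclideanLin A (sVec hA j) = sEig hA j • sVec hA j := by
  have h := hA.mulVec_eigenvectorBasis (sortPerm hA j)
  apply (WithLp.equiv 2 _).injective
  simpa [Matrix.toEuclideanLin_apply, sVec, sEig] using h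

lemma inner_sVec_toEuclidean (j : Fin n) (w : EuclideanSpace ℝ (Fin n)) :
    ⟪Matrix.toEuclideanLin A w, sVec hA j⟫ = sEig hA j * ⟪sVec hA j, w⟫ := by
  have hsymm : (Matrix.toEuclideanLin A).IsSymmetric :=
    Matrix.isHermitian_iff_isSymmetric.1 hA
  rw [hsymm w, toEuclideanLin_sVec hA j, inner_smul_right]
  rw [real_inner_comm]

lemma sum_sq_inner_sVec (w : EuclideanSpace ℝ (Fin n)) :
    ∑ j, ⟪sVec hA j, w⟫ ^ 2 = ‖w‖ ^ 2 := by
  have h := (Equiv.sum_comp (sortPerm hA)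
    (fun j => ⟪w, hA.eigenvectorBasis j⟫ * ⟪hA.eigenvectorBasis j, w⟫))
  rw [hA.eigenvectorBasis.sum_inner_mul_inner w w, real_inner_self_eq_norm_sq] at h
  rw [← h]
  congr 1; ext j
  rw [sq, sVec, real_inner_comm]

lemma inner_toEuclideanLin_self (w : EuclideanSpace ℝ (Fin n)) :
    ⟪Matrix.toEuclideanLin A w, w⟫ = ∑ j, sEig hA j * ⟪sVec hA j, w⟫ ^ 2 := by
  have h := (Equiv.sum_comp (sortPerm hA)
    (fun j => ⟪Matrix.toEuclideanLin A w, hA.eigenvectorBasis j⟫ * ⟪hA.eigenvectorBasis j, w⟫))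
  rw [hA.eigenvectorBasis.sum_inner_mul_inner _ w] at h
  rw [← h]
  congr 1; ext j
  have h2 : (⟪Matrix.toEuclideanLin A w, sVec hA j⟫) * ⟪sVec hA j, w⟫
      = sEig hA j * ⟪sVec hA j, w⟫ ^ 2 := by
    rw [inner_sVec_toEuclidean]; ring
  exact h2

lemma eigDesc_eq (i : Fin n) : eigDesc A i = sEig hA i := by
  simp only [eigDesc, sEig, sortPerm]
  rw [dif_pos hA]

end core
section cf
variable {k : ℕ} {M : Matrix (Fin k) (Fin k) ℝ} (hM : M.IsHermitian)

lemma inner_sVec_eq_zero_of_mem_span {i : ℕ} (hik : i < k)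
    {y : EuclideanSpace ℝ (Fin k)}
    (hy : y ∈ Submodule.span ℝ (Set.range
      (fun l : Fin (i+1) => sVec hM ⟨l, lt_of_le_of_lt (Nat.lt_succ_iff.mp l.2) hik⟩)))
    {j : Fin k} (hj : i < (j : ℕ)) : ⟪sVec hM j, y⟫ = 0 := by
  induction hy using Submodule.span_induction with
  | mem x hx =>
      obtain ⟨l, rfl⟩ := hx
      refine (orthonormal_sVec hM).2 ?_
      intro h
      have : (j : ℕ) = (l : ℕ) := by rw [h]
      omega
  | zero => simp
  | add x z hx hz ihx ihz => rw [inner_add_right, ihx, ihz]; ring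
  | smul a x hx ih => rw [inner_smul_right, ih]; ring

lemma courant_fischer (hM : M.IsHermitian) {i : ℕ} (hik : i < k) (W : Submodule ℝ (EuclideanSpace ℝ (Fin k)))
    (hW : Module.finrank ℝ W ≤ i) :
    ∃ y : EuclideanSpace ℝ (Fin k), ‖y‖ = 1 ∧ y ∈ Wᗮ ∧
      eigDesc M ⟨i, hik⟩ ≤ ⟪Matrix.toEuclideanLin M y, y⟫ := by
  classical
  set b : Fin (i+1) → EuclideanSpace ℝ (Fin k) :=
    fun l => sVec hM ⟨l, lt_of_le_of_lt (Nat.lt_succ_iff.mp l.2) hik⟩ with hb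
  set E : Submodule ℝ (EuclideanSpace ℝ (Fin k)) := Submodule.span ℝ (Set.range b) with hE
  have hbinj : Function.Injective (fun l : Fin (i+1) =>
      (⟨l, lt_of_le_of_lt (Nat.lt_succ_iff.mp l.2) hik⟩ : Fin k)) := by
    intro a c h
    simp only [Fin.mk.injEq] at h
    exact Fin.ext h
  have hon : Orthonormal ℝ b := (orthonormal_sVec hM).comp _ hbinj
  have hEdim : Module.finrank ℝ E = i + 1 := by
    rw [hE, finrank_span_eq_card hon.linearIndependent, Fintype.card_fin]
  have hWperp : k ≤ Module.finrank ℝ W + Module.finrank ℝ Wᗮ := by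
    rw [Submodule.finrank_add_finrank_orthogonal]
    simp
  have hinf : 0 < Module.finrank ℝ (E ⊓ Wᗮ : Submodule ℝ (EuclideanSpace ℝ (Fin k))) := by
    have hsum := Submodule.finrank_sup_add_finrank_inf_eq E Wᗮ
    have hsup : Module.finrank ℝ (E ⊔ Wᗮ : Submodule ℝ (EuclideanSpace ℝ (Fin k))) ≤ k := by
      have := Submodule.finrank_le (E ⊔ Wᗮ : Submodule ℝ (EuclideanSpace ℝ (Fin k)))
      simpa using this
    omega
  have hne : (E ⊓ Wᗮ : Submodule ℝ (EuclideanSpace ℝ (Fin k))) ≠ ⊥ := by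
    intro h
    rw [h] at hinf
    simp at hinf
  obtain ⟨y0, hy0mem, hy0ne⟩ := Submodule.exists_mem_ne_zero_of_ne_bot hne
  set y : EuclideanSpace ℝ (Fin k) := ‖y0‖⁻¹ • y0 with hy
  have hy0norm : ‖y0‖ ≠ 0 := norm_ne_zero_iff.mpr hy0ne
  have hynorm : ‖y‖ = 1 := by
    rw [hy, norm_smul, norm_inv, norm_norm, inv_mul_cancel₀ hy0norm]
  have hyE : y ∈ E := Submodule.smul_mem _ _ hy0mem.1
  have hyW : y ∈ Wᗮ := Submodule.smul_mem _ _ hy0mem.2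
  refine ⟨y, hynorm, hyW, ?_⟩
  have hsum1 : ∑ j, ⟪sVec hM j, y⟫ ^ 2 = 1 := by
    rw [sum_sq_inner_sVec, hynorm]; norm_num
  have hexp := inner_toEuclideanLin_self hM y
  rw [eigDesc_eq hM, hexp]
  have key : 0 ≤ ∑ j, (sEig hM j - sEig hM ⟨i, hik⟩) * ⟪sVec hM j, y⟫ ^ 2 := by
    apply Finset.sum_nonneg
    intro j _
    by_cases hj : (j : ℕ) ≤ i
    · have : sEig hM ⟨i, hik⟩ ≤ sEig hM j := sEig_antitone hM (by exact hj)
      exact mul_nonneg (by linarith) (sq_nonneg _)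
    · rw [inner_sVec_eq_zero_of_mem_span hM hik hyE (by omega)]
      simp
  have hexpand : ∑ j, (sEig hM j - sEig hM ⟨i, hik⟩) * ⟪sVec hM j, y⟫ ^ 2
      = (∑ j, sEig hM j * ⟪sVec hM j, y⟫ ^ 2) - sEig hM ⟨i, hik⟩ := by
    simp only [sub_mul]
    rw [Finset.sum_sub_distrib, ← Finset.mul_sum, hsum1, mul_one]
  linarith [key, hexpand.le, hexpand.ge]

end cf
section abel

lemma abel_log (L : ℝ) (hL : 0 < L) (N : ℕ) (μ c : ℕ → ℝ)
    (hmono : ∀ j, j < N → μ (j+1) ≤ μ j)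
    (hpos : ∀ j, j ≤ N → 0 < μ j)
    (hs : ∀ j, j ≤ N → ∑ l ∈ Finset.range (j+1), c l ^ 2 ≤ 1 + L / μ j) :
    ∑ l ∈ Finset.range (N+1), μ l * c l ^ 2 ≤ μ 0 + L + L * Real.log (μ 0 / μ N) := by
  have Q : ∀ j, j ≤ N →
      (∑ l ∈ Finset.range (j+1), μ l * c l ^ 2)
        - μ j * (∑ l ∈ Finset.range (j+1), c l ^ 2) + μ j
      ≤ μ 0 + L * Real.log (μ 0 / μ j) := by
    intro j
    induction j with
    | zero =>
        intro _
        simp only [Finset.sum_range_one, zero_add]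
        have : Real.log (μ 0 / μ 0) = 0 := by
          rw [div_self (ne_of_gt (hpos 0 (Nat.zero_le N)))]
          exact Real.log_one
        rw [this]
        ring_nf
        nlinarith [hpos 0 (Nat.zero_le N)]
    | succ j ih =>
        intro hj1
        have hjN : j ≤ N := Nat.le_of_succ_le hj1
        have hQ := ih hjN
        have hμj : 0 < μ j := hpos j hjN
        have hμj1 : 0 < μ (j+1) := hpos (j+1) hj1
        have hmn : μ (j+1) ≤ μ j := hmono j hj1
        set s := ∑ l ∈ Finset.range (j+1), c l ^ 2 with hsdef
        have hsle : s ≤ 1 + L / μ j := hs j hjN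
        have hsnn : 0 ≤ s := Finset.sum_nonneg fun l _ => sq_nonneg _
        have hlog1 : Real.log (μ (j+1) / μ j) ≤ μ (j+1) / μ j - 1 :=
          Real.log_le_sub_one_of_pos (div_pos hμj1 hμj)
        have hlogd : Real.log (μ (j+1) / μ j) = Real.log (μ (j+1)) - Real.log (μ j) :=
          Real.log_div (ne_of_gt hμj1) (ne_of_gt hμj)
        have hlogd0 : Real.log (μ 0 / μ j) = Real.log (μ 0) - Real.log (μ j) :=
          Real.log_div (ne_of_gt (hpos 0 (Nat.zero_le N))) (ne_of_gt hμj)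
        have hlogd1 : Real.log (μ 0 / μ (j+1)) = Real.log (μ 0) - Real.log (μ (j+1)) :=
          Real.log_div (ne_of_gt (hpos 0 (Nat.zero_le N))) (ne_of_gt hμj1)
        have e1 : (μ j - μ (j+1)) * (L / μ j) = L * (1 - μ (j+1) / μ j) := by
          field_simp
        have e2 : (μ j - μ (j+1)) * s ≤ (μ j - μ (j+1)) * (1 + L / μ j) :=
          mul_le_mul_of_nonneg_left hsle (by linarith)
        have key : (μ j - μ (j+1)) * s - (μ j - μ (j+1))
            ≤ L * (Real.log (μ j) - Real.log (μ (j+1))) := by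
          have h3 : 1 - μ (j+1) / μ j ≤ Real.log (μ j) - Real.log (μ (j+1)) := by
            rw [hlogd] at hlog1; linarith
          have h4 : L * (1 - μ (j+1) / μ j) ≤ L * (Real.log (μ j) - Real.log (μ (j+1))) :=
            mul_le_mul_of_nonneg_left h3 (le_of_lt hL)
          linarith [e2, e1.le, e1.ge]
        rw [Finset.sum_range_succ (fun l => μ l * c l ^ 2), Finset.sum_range_succ (fun l => c l ^ 2)]
        rw [hlogd1]
        rw [hlogd0] at hQ
        have expand : (∑ l ∈ Finset.range (j+1), μ l * c l ^ 2) + μ (j+1) * c (j+1) ^ 2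
            - μ (j+1) * (s + c (j+1) ^ 2) + μ (j+1)
            = (∑ l ∈ Finset.range (j+1), μ l * c l ^ 2) - μ (j+1) * s + μ (j+1) := by ring
        rw [← hsdef, expand]
        linarith [key, hQ]
  have hQN := Q N le_rfl
  have hμN : 0 < μ N := hpos N le_rfl
  have hsN : ∑ l ∈ Finset.range (N+1), c l ^ 2 ≤ 1 + L / μ N := hs N le_rfl
  have h5 : μ N * (∑ l ∈ Finset.range (N+1), c l ^ 2) ≤ μ N * (1 + L / μ N) :=
    mul_le_mul_of_nonneg_left hsN (le_of_lt hμN)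
  have h6 : μ N * (1 + L / μ N) = μ N + L := by field_simp
  linarith [hQN, h5, h6.le, h6.ge]

end abel
section helpers
variable {n k : ℕ}

lemma toEuclideanLin_inner_adj (S : Matrix (Fin k) (Fin n) ℝ)
    (x : EuclideanSpace ℝ (Fin n)) (y : EuclideanSpace ℝ (Fin k)) :
    ⟪Matrix.toEuclideanLin S x, y⟫ = ⟪x, Matrix.toEuclideanLin Sᵀ y⟫ := by
  simp only [Matrix.toEuclideanLin_apply, PiLp.inner_apply, RCLike.inner_apply,
    conj_trivial, PiLp.toLp_apply,
    Matrix.mulVec, dotProduct, Matrix.transpose_apply]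
  simp_rw [Finset.sum_mul, Finset.mul_sum]
  rw [Finset.sum_comm]
  apply Finset.sum_congr rfl; intro a _
  apply Finset.sum_congr rfl; intro b _
  ring

lemma toEuclideanLin_triple (S : Matrix (Fin k) (Fin n) ℝ) (A : Matrix (Fin n) (Fin n) ℝ)
    (y : EuclideanSpace ℝ (Fin k)) :
    Matrix.toEuclideanLin (S * A * Sᵀ) y
      = Matrix.toEuclideanLin S (Matrix.toEuclideanLin A (Matrix.toEuclideanLin Sᵀ y)) := by
  apply (WithLp.equiv 2 _).injective
  simp [Matrix.toEuclideanLin_apply, Matrix.mulVec_mulVec, Matrix.mul_assoc]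

end helpers

-- statement copies for the defs used above
set_option maxHeartbeats 1000000 in
/-- upper bound on the positive eigenvalues of `SASᵀ`. -/
theorem stmt9 :
    ∃ c : ℝ, 0 < c ∧
      ∀ (n k : ℕ) (A : Matrix (Fin n) (Fin n) ℝ) (hA : A.IsHermitian)
        (S : Matrix (Fin k) (Fin n) ℝ) (L : ℝ), 0 < L →
        (∀ i : Fin n, hA.eigenvalues i ≠ 0 → L ≤ |hA.eigenvalues i|) →
        SECondition S A L →
        ∀ (i : ℕ) (hin : i < n) (hik : i < k), 0 < eigDesc A ⟨i, hin⟩ →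
          eigDesc (S * A * Sᵀ) ⟨i, hik⟩ ≤
            eigDesc A ⟨i, hin⟩ + c * L * Real.log (eigDesc A ⟨i, hin⟩ / L + 2) := by
  classical
  refine ⟨2, by norm_num, ?_⟩
  intro n k A hA S L hL heig hSE i hin hik hposI0
  set μ : Fin n → ℝ := sEig hA with hμdef
  set g : Fin n → EuclideanSpace ℝ (Fin n) := sVec hA with hgdef
  set iF : Fin n := ⟨i, hin⟩ with hiFdef
  have hdescA : eigDesc A iF = μ iF := eigDesc_eq hA iF
  have hposI : 0 < μ iF := by rw [← hdescA]; exact hposI0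
  have hLeig : ∀ j : Fin n, 0 < μ j → L ≤ μ j := by
    intro j hj
    have h1 := heig (sortPerm hA j) (ne_of_gt hj)
    have h2 : |hA.eigenvalues (sortPerm hA j)| = μ j := abs_of_pos hj
    rwa [h2] at h1
  have hM : (S * A * Sᵀ).IsHermitian := by
    have h1 := Matrix.isHermitian_mul_mul_conjTranspose S hA
    rwa [Matrix.conjTranspose_eq_transpose_of_trivial] at h1
  -- the test subspace
  set b : Fin i → EuclideanSpace ℝ (Fin k) :=
    fun l => Matrix.toEuclideanLin S (g ⟨l, lt_trans l.2 hin⟩) with hbdef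
  set W : Submodule ℝ (EuclideanSpace ℝ (Fin k)) := Submodule.span ℝ (Set.range b) with hWdef
  have hWd : Module.finrank ℝ W ≤ i := by
    exact le_trans (finrank_range_le_card (R := ℝ) b) (by simp)
  obtain ⟨y, hy1, hyW, hmain⟩ := courant_fischer hM hik W hWd
  set w : EuclideanSpace ℝ (Fin n) := Matrix.toEuclideanLin Sᵀ y with hwdef
  set c : Fin n → ℝ := fun j => ⟪Matrix.toEuclideanLin S (g j), y⟫ with hcdef
  have hcw : ∀ j, (⟪g j, w⟫ : ℝ) = c j := fun j => (toEuclideanLin_inner_adj S (g j) y).symm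
  have hexp : (⟪Matrix.toEuclideanLin (S * A * Sᵀ) y, y⟫ : ℝ) = ∑ j, μ j * c j ^ 2 := by
    rw [toEuclideanLin_triple, toEuclideanLin_inner_adj S, inner_toEuclideanLin_self hA]
    exact Finset.sum_congr rfl fun j _ => by rw [hcw j]
  have hc0 : ∀ j : Fin n, (j : ℕ) < i → c j = 0 := by
    intro j hj
    have hmem : Matrix.toEuclideanLin S (g j) ∈ W := by
      apply Submodule.subset_span
      exact ⟨⟨(j : ℕ), hj⟩, by simp [hbdef]⟩
    exact (Submodule.mem_orthogonal W y).mp hyW _ hmem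
  -- largest index with positive eigenvalue
  set P : Finset (Fin n) := Finset.univ.filter (fun j => 0 < μ j) with hPdef
  have hiP : iF ∈ P := by simp [hPdef, hposI]
  have hPne : P.Nonempty := ⟨iF, hiP⟩
  set m : Fin n := P.max' hPne with hmdef
  have hmpos : 0 < μ m := by
    have := P.max'_mem hPne
    simpa [hPdef] using this
  have hposiff : ∀ j : Fin n, 0 < μ j ↔ j ≤ m := by
    intro j
    constructor
    · intro hj
      exact P.le_max' j (by simp [hPdef, hj])
    · intro hj
      exact lt_of_lt_of_le hmpos (sEig_antitone hA hj)
  have him : i ≤ (m : ℕ) := (hposiff iF).mp hposI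
  set N : ℕ := (m : ℕ) - i with hNdef
  have hiN : ∀ t, t ≤ N → i + t < n := by
    intro t ht
    have : i + t ≤ (m : ℕ) := by omega
    exact lt_of_le_of_lt this m.2
  have hiNm : ∀ t, t ≤ N → i + t ≤ (m : ℕ) := fun t ht => by omega
  -- totalized sequences
  set μ' : ℕ → ℝ := fun t => if h : i + t < n then μ ⟨i + t, h⟩ else 1 with hμ'def
  set c' : ℕ → ℝ := fun t => if h : i + t < n then c ⟨i + t, h⟩ else 0 with hc'def
  have hμ'eq : ∀ t (h : i + t < n), μ' t = μ ⟨i + t, h⟩ := fun t h => dif_pos h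
  have hc'eq : ∀ t (h : i + t < n), c' t = c ⟨i + t, h⟩ := fun t h => dif_pos h
  -- hypothesis for abel_log : monotone
  have hmono' : ∀ t, t < N → μ' (t + 1) ≤ μ' t := by
    intro t ht
    have h1 : i + t < n := hiN t (le_of_lt ht)
    have h2 : i + (t + 1) < n := hiN (t + 1) ht
    rw [hμ'eq t h1, hμ'eq (t + 1) h2]
    exact sEig_antitone hA (by rw [Fin.le_def]; simp)
  have hpos' : ∀ t, t ≤ N → 0 < μ' t := by
    intro t ht
    have h1 : i + t < n := hiN t ht
    rw [hμ'eq t h1]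
    refine (hposiff _).mpr ?_
    rw [Fin.le_def]; simpa using hiNm t ht
  -- the subspace-embedding estimate on partial sums
  have hs' : ∀ t, t ≤ N → ∑ l ∈ Finset.range (t + 1), c' l ^ 2 ≤ 1 + L / μ' t := by
    intro t ht
    have hjt : i + t < n := hiN t ht
    set lam : ℝ := μ' t with hlamdef
    have hlampos : 0 < lam := hpos' t ht
    have hlamL : L ≤ lam := by
      rw [hlamdef, hμ'eq t hjt]
      exact hLeig _ (by rw [← hμ'eq t hjt]; exact hlampos)
    set s : ℝ := ∑ l ∈ Finset.range (t + 1), c' l ^ 2 with hsdef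
    have hsnn : 0 ≤ s := Finset.sum_nonneg fun l _ => sq_nonneg _
    set vec : ℕ → EuclideanSpace ℝ (Fin n) :=
      fun l => if h : i + l < n then c' l • g ⟨i + l, h⟩ else 0 with hvecdef
    set u : EuclideanSpace ℝ (Fin n) := ∑ l ∈ Finset.range (t + 1), vec l with hudef
    -- u belongs to the eigen-span
    have humem : u ∈ eigSpanGE A lam := by
      apply Submodule.sum_mem
      intro l hl
      have hlt : l ≤ t := Nat.lt_succ_iff.mp (Finset.mem_range.mp hl)
      have hln : i + l < n := hiN l (le_trans hlt ht)
      rw [hvecdef]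
      simp only [dif_pos hln]
      apply Submodule.smul_mem
      have hposl : 0 < μ ⟨i + l, hln⟩ :=
        (hposiff _).mpr (by rw [Fin.le_def]; simpa using hiNm l (le_trans hlt ht))
      have habs : lam ≤ |μ ⟨i + l, hln⟩| := by
        rw [abs_of_pos hposl, hlamdef, hμ'eq t hjt]
        exact sEig_antitone hA (by rw [Fin.le_def]; simpa using Nat.add_le_add_left hlt i)
      apply Submodule.mem_iSup_of_mem (μ ⟨i + l, hln⟩)
      apply Submodule.mem_iSup_of_mem habs
      exact Module.End.mem_eigenspace_iff.mpr (toEuclideanLin_sVec hA _)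
    -- norm of u
    have hinj : ∀ l l' (h : i + l < n) (h' : i + l' < n),
        (⟪g ⟨i + l, h⟩, g ⟨i + l', h'⟩⟫ : ℝ) = if l = l' then 1 else 0 := by
      intro l l' h h'
      rw [orthonormal_iff_ite.mp (orthonormal_sVec hA)]
      by_cases hll : l = l'
      · subst hll; simp
      · rw [if_neg hll, if_neg (by simp only [Fin.mk.injEq]; omega)]
    have hnormu : (⟪u, u⟫ : ℝ) = s := by
      rw [hudef, sum_inner]
      rw [hsdef]
      apply Finset.sum_congr rfl
      intro l hl
      have hlt : l ≤ t := Nat.lt_succ_iff.mp (Finset.mem_range.mp hl)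
      have hln : i + l < n := hiN l (le_trans hlt ht)
      rw [inner_sum]
      have h1 : ∀ l' ∈ Finset.range (t + 1),
          (⟪vec l, vec l'⟫ : ℝ) = if l = l' then c' l ^ 2 else 0 := by
        intro l' hl'
        have hlt' : l' ≤ t := Nat.lt_succ_iff.mp (Finset.mem_range.mp hl')
        have hln' : i + l' < n := hiN l' (le_trans hlt' ht)
        rw [hvecdef]
        simp only [dif_pos hln, dif_pos hln']
        rw [real_inner_smul_left, real_inner_smul_right, hinj l l' hln hln']
        by_cases hll : l = l'
        · subst hll; simp [sq]
        · simp [hll]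
      rw [Finset.sum_congr rfl h1, Finset.sum_ite_eq (Finset.range (t + 1)) l fun _ => c' l ^ 2,
        if_pos hl]
    -- inner product of S u with y
    have hSu : (⟪Matrix.toEuclideanLin S u, y⟫ : ℝ) = s := by
      rw [hudef, map_sum, sum_inner, hsdef]
      apply Finset.sum_congr rfl
      intro l hl
      have hlt : l ≤ t := Nat.lt_succ_iff.mp (Finset.mem_range.mp hl)
      have hln : i + l < n := hiN l (le_trans hlt ht)
      rw [hvecdef]
      simp only [dif_pos hln]
      rw [LinearMap.map_smul, real_inner_smul_left]
      rw [hc'eq l hln, hcdef]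
      ring
    -- apply the embedding hypothesis
    have hemb := (hSE lam hlamL u humem).2
    have hmin : min (L / lam) (1 / 10 : ℝ) ≤ L / lam := min_le_left _ _
    have hnu : ‖u‖ ^ 2 = s := by rw [← real_inner_self_eq_norm_sq, hnormu]
    have hSu2 : ‖Matrix.toEuclideanLin S u‖ ^ 2 ≤ (1 + L / lam) * s := by
      calc ‖Matrix.toEuclideanLin S u‖ ^ 2
          ≤ (1 + min (L / lam) (1 / 10 : ℝ)) * ‖u‖ ^ 2 := hemb
        _ ≤ (1 + L / lam) * s := by
            rw [hnu]
            exact mul_le_mul_of_nonneg_right (by linarith) hsnn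
    have hcs : s ≤ ‖Matrix.toEuclideanLin S u‖ := by
      calc s = ⟪Matrix.toEuclideanLin S u, y⟫ := hSu.symm
        _ ≤ ‖Matrix.toEuclideanLin S u‖ * ‖y‖ := real_inner_le_norm _ _
        _ = ‖Matrix.toEuclideanLin S u‖ := by rw [hy1, mul_one]
    have hs2 : s ^ 2 ≤ (1 + L / lam) * s := by
      calc s ^ 2 ≤ ‖Matrix.toEuclideanLin S u‖ ^ 2 := pow_le_pow_left₀ hsnn hcs 2
        _ ≤ (1 + L / lam) * s := hSu2
    rcases eq_or_lt_of_le hsnn with h0 | h0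
    · rw [← h0]
      positivity
    · nlinarith [hs2, h0]
  -- apply the Abel summation bound
  have habel := abel_log L hL N μ' c' hmono' hpos' hs'
  -- rewrite the full sum
  set F : ℕ → ℝ := fun q => if h : q < n then μ ⟨q, h⟩ * c ⟨q, h⟩ ^ 2 else 0 with hFdef
  have hsum1 : ∑ j : Fin n, μ j * c j ^ 2 = ∑ q ∈ Finset.range n, F q := by
    rw [← Fin.sum_univ_eq_sum_range F n]
    apply Finset.sum_congr rfl
    intro j _
    rw [hFdef]
    simp only [dif_pos j.2]
  have hsub : Finset.Icc i (m : ℕ) ⊆ Finset.range n := by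
    intro q hq
    rw [Finset.mem_Icc] at hq
    exact Finset.mem_range.mpr (lt_of_le_of_lt hq.2 m.2)
  have hsum2 : ∑ q ∈ Finset.range n, F q ≤ ∑ q ∈ Finset.Icc i (m : ℕ), F q := by
    rw [← Finset.sum_sdiff hsub]
    have h1 : ∑ q ∈ Finset.range n \ Finset.Icc i (m : ℕ), F q ≤ 0 := by
      apply Finset.sum_nonpos
      intro q hq
      rw [Finset.mem_sdiff, Finset.mem_range, Finset.mem_Icc] at hq
      obtain ⟨hqn, hq2⟩ := hq
      rw [hFdef]
      simp only [dif_pos hqn]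
      by_cases hqi : q < i
      · rw [hc0 ⟨q, hqn⟩ hqi]
        simp
      · have hqm : (m : ℕ) < q := by omega
        have : ¬ (0 < μ ⟨q, hqn⟩) := by
          rw [hposiff]
          intro hcon
          rw [Fin.le_def] at hcon
          simp only [Fin.val_mk] at hcon
          omega
        exact mul_nonpos_of_nonpos_of_nonneg (by linarith) (sq_nonneg _)
    linarith
  have hsum3 : ∑ q ∈ Finset.Icc i (m : ℕ), F q = ∑ t ∈ Finset.range (N + 1), μ' t * c' t ^ 2 := by
    rw [← Finset.Ico_add_one_right_eq_Icc, Finset.sum_Ico_eq_sum_range]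
    have hN1 : (m : ℕ) + 1 - i = N + 1 := by omega
    rw [hN1]
    apply Finset.sum_congr rfl
    intro t ht
    have htN : t ≤ N := Nat.lt_succ_iff.mp (Finset.mem_range.mp ht)
    have hn : i + t < n := hiN t htN
    rw [hFdef, hμ'eq t hn, hc'eq t hn]
    simp only [dif_pos hn]
  -- combine
  have hμ'0 : μ' 0 = μ iF := by
    rw [hμ'eq 0 (by omega)]
    congr 1
  have hμ'N : μ' N = μ m := by
    have hn : i + N < n := hiN N le_rfl
    rw [hμ'eq N hn]
    congr 1
    refine Fin.ext ?_
    simp only [Fin.val_mk]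
    omega
  have hchain : eigDesc (S * A * Sᵀ) ⟨i, hik⟩ ≤ μ iF + L + L * Real.log (μ iF / μ m) := by
    calc eigDesc (S * A * Sᵀ) ⟨i, hik⟩ ≤ ⟪Matrix.toEuclideanLin (S * A * Sᵀ) y, y⟫ := hmain
      _ = ∑ j : Fin n, μ j * c j ^ 2 := hexp
      _ = ∑ q ∈ Finset.range n, F q := hsum1
      _ ≤ ∑ q ∈ Finset.Icc i (m : ℕ), F q := hsum2
      _ = ∑ t ∈ Finset.range (N + 1), μ' t * c' t ^ 2 := hsum3
      _ ≤ μ' 0 + L + L * Real.log (μ' 0 / μ' N) := habel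
      _ = μ iF + L + L * Real.log (μ iF / μ m) := by rw [hμ'0, hμ'N]
  -- final arithmetic
  have hLiF : L ≤ μ iF := hLeig iF hposI
  have hLm : L ≤ μ m := hLeig m hmpos
  have hx1 : (1 : ℝ) ≤ μ iF / L := (one_le_div hL).mpr hLiF
  have hlog1 : Real.log (μ iF / μ m) ≤ Real.log (μ iF / L) := by
    apply Real.log_le_log (by positivity)
    exact div_le_div_of_nonneg_left (le_of_lt hposI) hL hLm
  have hlog2 : Real.log (μ iF / L) ≤ Real.log (μ iF / L + 2) := by
    apply Real.log_le_log (by positivity)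
    linarith
  have hlog3 : (1 : ℝ) ≤ Real.log (μ iF / L + 2) := by
    have h3 : Real.exp 1 ≤ μ iF / L + 2 := by
      have := Real.exp_one_lt_d9
      linarith
    calc (1 : ℝ) = Real.log (Real.exp 1) := (Real.log_exp 1).symm
      _ ≤ Real.log (μ iF / L + 2) := Real.log_le_log (Real.exp_pos 1) h3
  rw [hdescA] at hposI0 ⊢
  have hfinal : L + L * Real.log (μ iF / μ m) ≤ 2 * L * Real.log (μ iF / L + 2) := by
    have h4 : L * Real.log (μ iF / μ m) ≤ L * Real.log (μ iF / L + 2) :=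
      mul_le_mul_of_nonneg_left (le_trans hlog1 hlog2) (le_of_lt hL)
    have h5 : L * 1 ≤ L * Real.log (μ iF / L + 2) :=
      mul_le_mul_of_nonneg_left hlog3 (le_of_lt hL)
    nlinarith
  linarith [hchain, hfinal]
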